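/- arXiv:2406.15108 — 6 statements merged into one kernel-verified Lean document; each statement's English description precedes it below -/
import Mathlib

section
/- Let ℓ ≥ 3 and let the path P_{2ℓ} have vertex set {1,...,2ℓ} with i adjacent to i+1. If W = {w_1,...,w_ℓ} where w_i ∈ {2i-1, 2i} for each i ∈ {1,...,ℓ}, then W is a strictly locating set of P_{2ℓ}. -/
open SimpleGraph

/-- Path graph on `Fin n` with `i` adjacent to `i+1`. -/
def pathG (n : ℕ) : SimpleGraph (Fin n) :=
  SimpleGraph.fromRel (fun i j => (i : ℕ) + 1 = (j : ℕ))

/-- Cycle graph on `Fin n` (vertices in cyclic order). -/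
def cycleG (n : ℕ) : SimpleGraph (Fin n) :=
  SimpleGraph.fromRel (fun i j => (i : ℕ) + 1 = (j : ℕ) ∨ ((i : ℕ) = n - 1 ∧ (j : ℕ) = 0))

/-- `S` is a resolving set of `G`. -/
def resolvingSet {V : Type*} (G : SimpleGraph V) (S : Set V) : Prop :=
  ∀ x y : V, x ≠ y → ∃ z ∈ S, G.dist x z ≠ G.dist y z

/-- `S` is a locating set of `G`. -/
def locatingSet {V : Type*} (G : SimpleGraph V) (S : Set V) : Prop :=
  ∀ u v : V, u ∉ S → v ∉ S → u ≠ v → G.neighborSet u ∩ S ≠ G.neighborSet v ∩ S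

/-- `S` is a strictly locating set of `G`. -/
def strictlyLocatingSet {V : Type*} (G : SimpleGraph V) (S : Set V) : Prop :=
  locatingSet G S ∧ ∀ u : V, u ∉ S → G.neighborSet u ∩ S ≠ S

/-- Corona product `G ⊙ H`: vertex `Sum.inl a` is a vertex of `G`, and
`Sum.inr (i, h)` is the vertex `h` of the `i`-th copy of `H`. -/
def corona {α β : Type*} (G : SimpleGraph α) (H : SimpleGraph β) :
    SimpleGraph (α ⊕ α × β) :=
  SimpleGraph.fromRel (fun x y =>
    match x, y with
    | Sum.inl a, Sum.inl b => G.Adj a b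
    | Sum.inl a, Sum.inr p => a = p.1
    | Sum.inr p, Sum.inr q => p.1 = q.1 ∧ H.Adj p.2 q.2
    | _, _ => False)

/-- `K₁ ⊙ H`: the graph `H` together with one universal vertex `none`. -/
def cone {β : Type*} (H : SimpleGraph β) : SimpleGraph (Option β) :=
  SimpleGraph.fromRel (fun x y =>
    match x, y with
    | some a, some b => H.Adj a b
    | none, some _ => True
    | _, _ => False)

lemma adjW (ℓ : ℕ) (w : Fin ℓ → Fin (2 * ℓ))
    (hw : ∀ i : Fin ℓ, (w i : ℕ) = 2 * (i : ℕ) ∨ (w i : ℕ) = 2 * (i : ℕ) + 1)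
    (v : Fin (2 * ℓ)) (hv : v ∉ Set.range w) :
    (pathG (2 * ℓ)).Adj v (w ⟨(v : ℕ) / 2, by omega⟩) := by
  have hne : w ⟨(v : ℕ) / 2, by omega⟩ ≠ v := fun h => hv ⟨_, h⟩
  have hne' : (w ⟨(v : ℕ) / 2, by omega⟩ : ℕ) ≠ (v : ℕ) := fun h => hne (Fin.ext h)
  have h1 := hw ⟨(v : ℕ) / 2, by omega⟩
  simp only [pathG, SimpleGraph.fromRel_adj, ne_eq, Fin.ext_iff] at h1 ⊢
  omega

lemma keyLem (ℓ : ℕ) (w : Fin ℓ → Fin (2 * ℓ))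
    (hw : ∀ i : Fin ℓ, (w i : ℕ) = 2 * (i : ℕ) ∨ (w i : ℕ) = 2 * (i : ℕ) + 1)
    (u v : Fin (2 * ℓ)) (hu : u ∉ Set.range w) (hv : v ∉ Set.range w)
    (hlt : (u : ℕ) < (v : ℕ))
    (heq : (pathG (2 * ℓ)).neighborSet u ∩ Set.range w
         = (pathG (2 * ℓ)).neighborSet v ∩ Set.range w) : False := by
  have hadju := adjW ℓ w hw u hu
  have hadjv := adjW ℓ w hw v hv
  -- w (u/2) in N(u) ∩ S, so in N(v) ∩ S
  have h1 : w ⟨(u : ℕ) / 2, by omega⟩ ∈ (pathG (2 * ℓ)).neighborSet v ∩ Set.range w := by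
    rw [← heq]; exact ⟨hadju, ⟨_, rfl⟩⟩
  have h2 : w ⟨(v : ℕ) / 2, by omega⟩ ∈ (pathG (2 * ℓ)).neighborSet u ∩ Set.range w := by
    rw [heq]; exact ⟨hadjv, ⟨_, rfl⟩⟩
  have a1 : (pathG (2 * ℓ)).Adj v (w ⟨(u : ℕ) / 2, by omega⟩) := h1.1
  have a2 : (pathG (2 * ℓ)).Adj u (w ⟨(v : ℕ) / 2, by omega⟩) := h2.1
  have hwi := hw ⟨(u : ℕ) / 2, by omega⟩
  have hwj := hw ⟨(v : ℕ) / 2, by omega⟩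
  have hneu : (w ⟨(u : ℕ) / 2, by omega⟩ : ℕ) ≠ (u : ℕ) := by
    intro h; exact hu ⟨_, Fin.ext h⟩
  have hnev : (w ⟨(v : ℕ) / 2, by omega⟩ : ℕ) ≠ (v : ℕ) := by
    intro h; exact hv ⟨_, Fin.ext h⟩
  simp only [pathG, SimpleGraph.fromRel_adj, ne_eq, Fin.ext_iff] at a1 a2
  simp only at hwi hwj
  omega

theorem stmt0 (ℓ : ℕ) (hℓ : 3 ≤ ℓ) (w : Fin ℓ → Fin (2 * ℓ))
    (hw : ∀ i : Fin ℓ, (w i : ℕ) = 2 * (i : ℕ) ∨ (w i : ℕ) = 2 * (i : ℕ) + 1) :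
    strictlyLocatingSet (pathG (2 * ℓ)) (Set.range w) := by
  constructor
  · intro u v hu hv huv heq
    rcases lt_or_gt_of_ne (fun h : (u : ℕ) = (v : ℕ) => huv (Fin.ext h)) with h | h
    · exact keyLem ℓ w hw u v hu hv h heq
    · exact keyLem ℓ w hw v u hv hu h heq.symm
  · intro u hu heq
    have key : ∀ k : Fin ℓ, (pathG (2 * ℓ)).Adj u (w k) := by
      intro k
      have : w k ∈ (pathG (2 * ℓ)).neighborSet u ∩ Set.range w := by
        rw [heq]; exact ⟨k, rfl⟩
      exact this.1
    have k0 := key ⟨0, by omega⟩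
    have k2 := key ⟨2, by omega⟩
    have h0 := hw ⟨0, by omega⟩
    have h2 := hw ⟨2, by omega⟩
    simp only [pathG, SimpleGraph.fromRel_adj, ne_eq, Fin.ext_iff] at k0 k2
    simp only at h0 h2
    omega
end

section
/- Let ℓ ≥ 3 and let the cycle C_{2ℓ} have vertex set {1,...,2ℓ} with i adjacent to i+1 (indices mod 2ℓ). If W = {w_1,...,w_ℓ} where w_i ∈ {2i-1, 2i} for each i ∈ {1,...,ℓ}, then W is a strictly locating set of C_{2ℓ}. -/
open SimpleGraph

lemma cycle_adj_val {n : ℕ} (x y : Fin n) :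
    (cycleG n).Adj x y ↔ (x : ℕ) ≠ (y : ℕ) ∧
      ((((x:ℕ)+1 = (y:ℕ)) ∨ ((x:ℕ) = n-1 ∧ (y:ℕ) = 0)) ∨
       (((y:ℕ)+1 = (x:ℕ)) ∨ ((y:ℕ) = n-1 ∧ (x:ℕ) = 0))) := by
  rw [cycleG, SimpleGraph.fromRel_adj, Ne, Fin.ext_iff]

theorem stmt1 (ℓ : ℕ) (hℓ : 3 ≤ ℓ) (w : Fin ℓ → Fin (2 * ℓ))
    (hw : ∀ i : Fin ℓ, (w i : ℕ) = 2 * (i : ℕ) ∨ (w i : ℕ) = 2 * (i : ℕ) + 1) :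
    strictlyLocatingSet (cycleG (2 * ℓ)) (Set.range w) := by
  have hwne : ∀ (z : Fin (2*ℓ)), z ∉ Set.range w → ∀ k, (w k : ℕ) ≠ (z : ℕ) := by
    intro z hz k hk
    exact hz ⟨k, Fin.ext hk⟩
  constructor
  · intro u v hu hv huv h
    have hun : (u:ℕ) < 2*ℓ := u.isLt
    have hvn : (v:ℕ) < 2*ℓ := v.isLt
    set i : Fin ℓ := ⟨(u:ℕ)/2, by omega⟩ with hidef
    set j : Fin ℓ := ⟨(v:ℕ)/2, by omega⟩ with hjdef
    have hiv : (i:ℕ) = (u:ℕ)/2 := rfl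
    have hjv : (j:ℕ) = (v:ℕ)/2 := rfl
    have hwi := hw i
    have hwj := hw j
    have hwiu := hwne u hu i
    have hwjv := hwne v hv j
    have hwiv := hwne v hv i
    have hwju := hwne u hu j
    have hpu : ((u:ℕ) = 2*(i:ℕ) ∧ (w i:ℕ) = 2*(i:ℕ)+1) ∨
        ((u:ℕ) = 2*(i:ℕ)+1 ∧ (w i:ℕ) = 2*(i:ℕ)) := by omega
    have hpv : ((v:ℕ) = 2*(j:ℕ) ∧ (w j:ℕ) = 2*(j:ℕ)+1) ∨
        ((v:ℕ) = 2*(j:ℕ)+1 ∧ (w j:ℕ) = 2*(j:ℕ)) := by omega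
    have hin : (i:ℕ) < ℓ := i.isLt
    have hjn : (j:ℕ) < ℓ := j.isLt
    have hadj_uwi : (cycleG (2*ℓ)).Adj u (w i) := by rw [cycle_adj_val]; omega
    have hadj_vwj : (cycleG (2*ℓ)).Adj v (w j) := by rw [cycle_adj_val]; omega
    have hm1 : w i ∈ (cycleG (2*ℓ)).neighborSet v ∩ Set.range w := by
      rw [← h]; exact ⟨hadj_uwi, ⟨i, rfl⟩⟩
    have hm2 : w j ∈ (cycleG (2*ℓ)).neighborSet u ∩ Set.range w := by
      rw [h]; exact ⟨hadj_vwj, ⟨j, rfl⟩⟩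
    have h1 := (cycle_adj_val v (w i)).mp hm1.1
    have h2 := (cycle_adj_val u (w j)).mp hm2.1
    have huv' : (u:ℕ) ≠ (v:ℕ) := fun e => huv (Fin.ext e)
    omega
  · intro u hu h
    have hun : (u:ℕ) < 2*ℓ := u.isLt
    set i : Fin ℓ := ⟨(u:ℕ)/2, by omega⟩ with hidef
    have hiv : (i:ℕ) = (u:ℕ)/2 := rfl
    have hin : (i:ℕ) < ℓ := i.isLt
    set k2 : Fin ℓ := ⟨((u:ℕ)/2 + 1) % ℓ, Nat.mod_lt _ (by omega)⟩ with hk2def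
    set k3 : Fin ℓ := ⟨((u:ℕ)/2 + 2) % ℓ, Nat.mod_lt _ (by omega)⟩ with hk3def
    have hk2 : (k2:ℕ) = (i:ℕ)+1 ∨ ((i:ℕ)+1 = ℓ ∧ (k2:ℕ) = 0) := by
      have : (k2:ℕ) = ((i:ℕ)+1) % ℓ := rfl
      rcases Nat.lt_or_ge ((i:ℕ)+1) ℓ with h'|h'
      · left; rw [this, Nat.mod_eq_of_lt h']
      · right
        have he : (i:ℕ)+1 = ℓ := by omega
        constructor
        · exact he
        · rw [this, he, Nat.mod_self]
    have hk3 : (k3:ℕ) = (i:ℕ)+2 ∨ ((i:ℕ)+2 = ℓ ∧ (k3:ℕ) = 0) ∨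
        ((i:ℕ)+1 = ℓ ∧ (k3:ℕ) = 1) := by
      have hv3 : (k3:ℕ) = ((i:ℕ)+2) % ℓ := rfl
      rcases Nat.lt_or_ge ((i:ℕ)+2) ℓ with h'|h'
      · left; rw [hv3, Nat.mod_eq_of_lt h']
      · rcases Nat.lt_or_ge ((i:ℕ)+1) ℓ with h''|h''
        · right; left
          have he : (i:ℕ)+2 = ℓ := by omega
          exact ⟨he, by rw [hv3, he, Nat.mod_self]⟩
        · right; right
          have he : (i:ℕ)+1 = ℓ := by omega
          refine ⟨he, ?_⟩
          have : (i:ℕ)+2 = ℓ + 1 := by omega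
          rw [hv3, this, Nat.add_mod_left, Nat.mod_eq_of_lt (by omega)]
    have hadj : ∀ k : Fin ℓ, (cycleG (2*ℓ)).Adj u (w k) := by
      intro k
      have : w k ∈ (cycleG (2*ℓ)).neighborSet u ∩ Set.range w := by
        rw [h]; exact ⟨k, rfl⟩
      exact this.1
    have h1 := (cycle_adj_val u (w i)).mp (hadj i)
    have h2 := (cycle_adj_val u (w k2)).mp (hadj k2)
    have h3 := (cycle_adj_val u (w k3)).mp (hadj k3)
    have hwi := hw i
    have hwk2 := hw k2
    have hwk3 := hw k3
    omega
end

section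
/- Let G and H be connected graphs each of order at least two, and let G ⊙ H denote their corona product. If S is a resolving set of G ⊙ H, then for every j ∈ V(G), the intersection S ∩ V(H_j) is a resolving set of the copy H_j of H (equivalently, of H). -/
open SimpleGraph

section Aux

variable {α β : Type*} {G : SimpleGraph α} {H : SimpleGraph β}

lemma corona_adj_inr_inr {j k : α} {a c : β} :
    (corona G H).Adj (Sum.inr (j, a)) (Sum.inr (k, c)) ↔ j = k ∧ H.Adj a c := by
  constructor
  · rintro ⟨hne, h | h⟩
    · exact ⟨h.1, h.2⟩
    · exact ⟨h.1.symm, h.2.symm⟩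
  · rintro ⟨rfl, h⟩
    exact ⟨by simp [h.ne], Or.inl ⟨rfl, h⟩⟩

lemma corona_adj_inr_inl {j b : α} {a : β} :
    (corona G H).Adj (Sum.inr (j, a)) (Sum.inl b) ↔ b = j := by
  constructor
  · rintro ⟨hne, h | h⟩
    · exact h.elim
    · exact h
  · rintro rfl
    exact ⟨by simp, Or.inr rfl⟩

lemma corona_adj_inl_inl {a b : α} :
    (corona G H).Adj (Sum.inl a : α ⊕ α × β) (Sum.inl b) ↔ G.Adj a b := by
  constructor
  · rintro ⟨hne, h | h⟩
    · exact h
    · exact h.symm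
  · intro h
    exact ⟨by simp [h.ne], Or.inl h⟩

/-- classification of neighbors of a copy vertex -/
lemma corona_neighbor {j : α} {a : β} {y : α ⊕ α × β}
    (h : (corona G H).Adj (Sum.inr (j, a)) y) :
    y = Sum.inl j ∨ ∃ c, y = Sum.inr (j, c) ∧ H.Adj a c := by
  match y with
  | Sum.inl b =>
    left
    rw [corona_adj_inr_inl.mp h]
  | Sum.inr (k, c) =>
    right
    obtain ⟨rfl, hadj⟩ := corona_adj_inr_inr.mp h
    exact ⟨c, rfl, hadj⟩

lemma corona_connected (hG : G.Connected) : (corona G H).Connected := by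
  have : Nonempty α := hG.nonempty
  have key : ∀ x : α ⊕ α × β, ∃ a, (corona G H).Reachable x (Sum.inl a) := by
    rintro (a | ⟨k, h⟩)
    · exact ⟨a, Reachable.refl _⟩
    · exact ⟨k, ((corona_adj_inr_inl (G := G)).mpr rfl).reachable⟩
  refine ⟨fun x y => ?_⟩
  obtain ⟨a, hx⟩ := key x
  obtain ⟨b, hy⟩ := key y
  have hab : (corona G H).Reachable (Sum.inl a) (Sum.inl b) :=
    (hG a b).map ⟨Sum.inl, fun hadj => corona_adj_inl_inl.mpr hadj⟩
  exact hx.trans (hab.trans hy.symm)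

lemma corona_walk_through_hub {j : α} :
    ∀ {x z : α ⊕ α × β} (p : (corona G H).Walk x z),
      (∀ c : β, z ≠ Sum.inr (j, c)) → (∃ a, x = Sum.inr (j, a)) →
      1 + (corona G H).dist (Sum.inl j) z ≤ p.length := by
  intro x z p
  induction p with
  | nil =>
    rintro hz ⟨a, rfl⟩
    exact absurd rfl (hz a)
  | @cons u v w h q ih =>
    rintro hz ⟨a, rfl⟩
    rcases corona_neighbor h with rfl | ⟨c, rfl, _⟩
    · have := (corona G H).dist_le q
      simp only [Walk.length_cons]
      omega
    · have := ih hz ⟨c, rfl⟩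
      simp only [Walk.length_cons]
      omega

lemma corona_dist_far (hG : G.Connected) {j : α} {a : β} {z : α ⊕ α × β}
    (hz : ∀ c : β, z ≠ Sum.inr (j, c)) :
    (corona G H).dist (Sum.inr (j, a)) z = 1 + (corona G H).dist (Sum.inl j) z := by
  have hc := corona_connected (H := H) hG
  refine le_antisymm ?_ ?_
  · obtain ⟨p, hp⟩ := (hc (Sum.inl j) z).exists_walk_length_eq_dist
    have := (corona G H).dist_le
      (Walk.cons ((corona_adj_inr_inl (G := G) (a := a)).mpr rfl) p)
    simpa [hp, Nat.add_comm] using this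
  · obtain ⟨p, hp⟩ := (hc (Sum.inr (j, a)) z).exists_walk_length_eq_dist
    rw [← hp]
    exact corona_walk_through_hub p hz ⟨a, rfl⟩

open Classical in
lemma corona_dist_same (hG : G.Connected) {j : α} {a c : β} :
    (corona G H).dist (Sum.inr (j, a)) (Sum.inr (j, c)) =
      if a = c then 0 else if H.Adj a c then 1 else 2 := by
  classical
  have hc := corona_connected (H := H) hG
  by_cases hac : a = c
  · simp [hac]
  · by_cases hadj : H.Adj a c
    · simp only [hac, if_false, hadj, if_true]
      exact dist_eq_one_iff_adj.mpr (corona_adj_inr_inr.mpr ⟨rfl, hadj⟩)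
    · simp only [hac, if_false, hadj, if_false]
      have hne : (Sum.inr (j, a) : α ⊕ α × β) ≠ Sum.inr (j, c) := by simp [hac]
      have h0 : 0 < (corona G H).dist (Sum.inr (j, a)) (Sum.inr (j, c)) :=
        hc.pos_dist_of_ne hne
      have h1 : (corona G H).dist (Sum.inr (j, a)) (Sum.inr (j, c)) ≠ 1 := by
        intro h
        exact hadj (corona_adj_inr_inr.mp (dist_eq_one_iff_adj.mp h)).2
      have h2 : (corona G H).dist (Sum.inr (j, a)) (Sum.inr (j, c)) ≤ 2 := by
        have e1 : (corona G H).Adj (Sum.inr (j, a)) (Sum.inl j) :=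
          corona_adj_inr_inl.mpr rfl
        have e2 : (corona G H).Adj (Sum.inl j) (Sum.inr (j, c)) :=
          (corona_adj_inr_inl.mpr rfl).symm
        have := (corona G H).dist_le (Walk.cons e1 (Walk.cons e2 Walk.nil))
        simpa using this
      omega

end Aux

theorem stmt2 {α β : Type*} [Nontrivial α] [Nontrivial β]
    (G : SimpleGraph α) (H : SimpleGraph β) (hG : G.Connected) (hH : H.Connected)
    (S : Set (α ⊕ α × β)) (hS : resolvingSet (corona G H) S) (j : α) :
    resolvingSet H {h : β | Sum.inr (j, h) ∈ S} := by
  classical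
  intro a b hab
  obtain ⟨z, hzS, hzd⟩ := hS (Sum.inr (j, a)) (Sum.inr (j, b)) (by simp [hab])
  by_cases hz : ∃ c, z = Sum.inr (j, c)
  · obtain ⟨c, rfl⟩ := hz
    refine ⟨c, hzS, ?_⟩
    intro heq
    apply hzd
    rw [corona_dist_same hG, corona_dist_same hG]
    by_cases hac : a = c
    · exfalso
      subst hac
      have : H.dist b a = 0 := by rw [← heq, dist_self]
      exact hab ((hH.dist_eq_zero_iff.mp this).symm)
    · by_cases hbc : b = c
      · exfalso
        subst hbc
        have : H.dist a b = 0 := by rw [heq, dist_self]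
        exact hab (hH.dist_eq_zero_iff.mp this)
      · have hiff : H.Adj a c ↔ H.Adj b c := by
          rw [← dist_eq_one_iff_adj, ← dist_eq_one_iff_adj, heq]
        by_cases hadj : H.Adj a c
        · simp [hac, hbc, hadj, hiff.mp hadj]
        · simp [hac, hbc, hadj, hiff.not.mp hadj]
  · exfalso
    apply hzd
    push_neg at hz
    rw [corona_dist_far hG hz, corona_dist_far hG hz]
end

section
/- Let G and H be connected graphs each of order at least two with diam(H) ≤ 2. If S_i is a resolving set of the copy H_i of H for each i ∈ {1,...,n(G)}, then the union ∪_{i=1}^{n(G)} S_i is a resolving set of the corona product G ⊙ H. -/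
open SimpleGraph

namespace CoronaAux

open SimpleGraph Sum

variable {α β : Type*} (G : SimpleGraph α) (H : SimpleGraph β)

lemma adj_inl_inl {a b : α} : (corona G H).Adj (inl a) (inl b) ↔ G.Adj a b := by
  simp only [corona, fromRel_adj]
  constructor
  · rintro ⟨_, h | h⟩
    · exact h
    · exact h.symm
  · intro h
    exact ⟨by simp [h.ne], Or.inl h⟩

lemma adj_inl_inr {a i : α} {h : β} : (corona G H).Adj (inl a) (inr (i, h)) ↔ a = i := by
  simp only [corona, fromRel_adj]
  constructor
  · rintro ⟨_, h | h⟩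
    · exact h
    · exact h.elim
  · intro h
    exact ⟨by simp, Or.inl h⟩

lemma adj_inr_inr {i j : α} {h k : β} :
    (corona G H).Adj (inr (i, h)) (inr (j, k)) ↔ i = j ∧ H.Adj h k := by
  simp only [corona, fromRel_adj]
  constructor
  · rintro ⟨_, ⟨h1, h2⟩ | ⟨h1, h2⟩⟩
    · exact ⟨h1, h2⟩
    · exact ⟨h1.symm, h2.symm⟩
  · rintro ⟨rfl, h⟩
    exact ⟨by simp [h.ne], Or.inl ⟨rfl, h⟩⟩

/-- The embedding of `G` into the corona. -/
def homG : G →g corona G H := ⟨inl, fun h => (adj_inl_inl G H).mpr h⟩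

/-- The embedding of the `i`-th copy of `H` into the corona. -/
def homCopy (i : α) : H →g corona G H :=
  ⟨fun b => inr (i, b), fun h => (adj_inr_inr G H).mpr ⟨rfl, h⟩⟩

lemma corona_connected (hG : G.Connected) : (corona G H).Connected := by
  have hne : Nonempty α := hG.nonempty
  obtain ⟨a0⟩ := hne
  have key : ∀ x : α ⊕ α × β, (corona G H).Reachable x (inl a0) := by
    rintro (a | ⟨i, h⟩)
    · exact Reachable.map (homG G H) (hG.preconnected a a0)
    · exact (Adj.reachable (((adj_inl_inr G H).mpr rfl).symm)).trans
        (Reachable.map (homG G H) (hG.preconnected i a0))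
  have : Nonempty (α ⊕ α × β) := ⟨inl a0⟩
  exact ⟨fun x y => (key x).trans (key y).symm⟩

lemma walk_cases {i : α} :
    ∀ {u z : α ⊕ α × β} (p : (corona G H).Walk u z), (∃ x, u = inr (i, x)) →
      inl i ∈ p.support ∨ ∀ v ∈ p.support, ∃ b, v = inr (i, b) := by
  intro u z p
  induction p with
  | nil =>
    rintro ⟨x, rfl⟩
    right
    intro v hv
    rw [SimpleGraph.Walk.support_nil, List.mem_singleton] at hv
    exact ⟨x, hv⟩
  | @cons u v w adj q ih =>
    rintro ⟨x, rfl⟩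
    match v, adj with
    | inl a, adj =>
      have : a = i := (adj_inl_inr G H).mp adj.symm
      subst this
      left
      rw [SimpleGraph.Walk.support_cons, List.mem_cons]
      exact Or.inr q.start_mem_support
    | inr (j, k), adj =>
      have hij : i = j := ((adj_inr_inr G H).mp adj).1
      subst hij
      rcases ih ⟨k, rfl⟩ with h1 | h2
      · left
        rw [SimpleGraph.Walk.support_cons, List.mem_cons]
        exact Or.inr h1
      · right
        intro v hv
        rw [SimpleGraph.Walk.support_cons, List.mem_cons] at hv
        rcases hv with rfl | hv
        · exact ⟨x, rfl⟩
        · exact h2 v hv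

lemma walk_project {i : α} :
    ∀ {u z : α ⊕ α × β} (p : (corona G H).Walk u z),
      (∀ v ∈ p.support, ∃ b, v = inr (i, b)) →
      ∀ {x y : β}, u = inr (i, x) → z = inr (i, y) →
      ∃ q : H.Walk x y, q.length = p.length := by
  intro u z p
  induction p with
  | nil =>
    rintro _ x y rfl hz
    obtain ⟨rfl⟩ : x = y := by
      have := hz
      simp only [inr.injEq, Prod.mk.injEq] at this
      exact this.2
    exact ⟨SimpleGraph.Walk.nil, rfl⟩
  | @cons u v w adj q ih =>
    rintro hall x y rfl rfl
    obtain ⟨b, rfl⟩ : ∃ b, v = inr (i, b) := by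
      apply hall
      rw [SimpleGraph.Walk.support_cons, List.mem_cons]
      exact Or.inr q.start_mem_support
    have hadj : H.Adj x b := ((adj_inr_inr G H).mp adj).2
    obtain ⟨q', hq'⟩ := ih (fun v hv => hall v (by
      rw [SimpleGraph.Walk.support_cons, List.mem_cons]; exact Or.inr hv)) rfl rfl
    exact ⟨SimpleGraph.Walk.cons hadj q', by simp [hq']⟩

lemma two_le_length_of_mem {X : Type*} {Γ : SimpleGraph X} :
    ∀ {u v m : X} (p : Γ.Walk u v), m ∈ p.support → m ≠ u → m ≠ v → 2 ≤ p.length := by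
  intro u v m p
  induction p with
  | nil =>
    intro hm h1 _
    rw [SimpleGraph.Walk.support_nil, List.mem_singleton] at hm
    exact absurd hm h1
  | @cons u v w adj q ih =>
    intro hm h1 h2
    rw [SimpleGraph.Walk.support_cons, List.mem_cons] at hm
    rcases hm with rfl | hm
    · exact absurd rfl h1
    · cases q with
      | nil =>
        rw [SimpleGraph.Walk.support_nil, List.mem_singleton] at hm
        exact absurd hm h2
      | cons a q' =>
        simp only [SimpleGraph.Walk.length_cons]
        omega

lemma dist_split {X : Type*} {Γ : SimpleGraph X} {u v m : X} (hr : Γ.Reachable u v)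
    (hm : ∀ p : Γ.Walk u v, m ∈ p.support) :
    Γ.dist u m + Γ.dist m v ≤ Γ.dist u v := by
  classical
  obtain ⟨p, hp⟩ := hr.exists_walk_length_eq_dist
  have hmem := hm p
  calc Γ.dist u m + Γ.dist m v
      ≤ (p.takeUntil m hmem).length + (p.dropUntil m hmem).length :=
        add_le_add (SimpleGraph.dist_le _) (SimpleGraph.dist_le _)
    _ = p.length := by rw [← SimpleGraph.Walk.length_append, p.take_spec hmem]
    _ = _ := hp

lemma hub_mem {i : α} {h : β} {z : α ⊕ α × β} (hz : ∀ b, z ≠ inr (i, b))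
    (p : (corona G H).Walk (inr (i, h)) z) : inl i ∈ p.support := by
  rcases walk_cases G H p ⟨h, rfl⟩ with h1 | h2
  · exact h1
  · obtain ⟨b, hb⟩ := h2 z p.end_mem_support
    exact absurd hb (hz b)

lemma hub_mem' {i : α} {h : β} {z : α ⊕ α × β} (hz : ∀ b, z ≠ inr (i, b))
    (p : (corona G H).Walk z (inr (i, h))) : inl i ∈ p.support := by
  have := hub_mem G H hz p.reverse
  rwa [SimpleGraph.Walk.support_reverse, List.mem_reverse] at this

lemma dist_copy (hG : G.Connected) (hH : H.Connected) (hdiam : ∀ x y : β, H.dist x y ≤ 2)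
    (i : α) (h s : β) :
    (corona G H).dist (inr (i, h)) (inr (i, s)) = H.dist h s := by
  rcases eq_or_ne h s with rfl | hne
  · simp [SimpleGraph.dist_self]
  apply le_antisymm
  · obtain ⟨q, hq⟩ := (hH.preconnected h s).exists_walk_length_eq_dist
    have := SimpleGraph.dist_le (q.map (homCopy G H i))
    rwa [SimpleGraph.Walk.length_map, hq] at this
  · obtain ⟨p, hp⟩ :=
      ((corona_connected G H hG).preconnected _ _).exists_walk_length_eq_dist
    rw [← hp]
    rcases walk_cases G H p ⟨h, rfl⟩ with hhub | hall
    · have h2 : 2 ≤ p.length :=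
        two_le_length_of_mem p hhub (by simp) (by simp)
      exact le_trans (hdiam h s) h2
    · obtain ⟨q, hq⟩ := walk_project G H p hall rfl rfl
      rw [← hq]
      exact SimpleGraph.dist_le q

end CoronaAux


theorem stmt3 {α β : Type*} [Nontrivial α] [Nontrivial β]
    (G : SimpleGraph α) (H : SimpleGraph β) (hG : G.Connected) (hH : H.Connected)
    (hdiam : ∀ x y : β, H.dist x y ≤ 2)
    (S : α → Set β) (hS : ∀ i : α, resolvingSet H (S i)) :
    resolvingSet (corona G H) {z : α ⊕ α × β | ∃ i h, z = Sum.inr (i, h) ∧ h ∈ S i} := by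
  classical
  have hC := CoronaAux.corona_connected G H hG
  have hSne : ∀ i : α, ∃ s, s ∈ S i := fun i => by
    obtain ⟨a, b, hab⟩ := exists_pair_ne β
    obtain ⟨z, hz, _⟩ := hS i a b hab
    exact ⟨z, hz⟩
  have memW : ∀ (i : α) (s : β), s ∈ S i →
      Sum.inr (i, s) ∈ {z : α ⊕ α × β | ∃ i h, z = Sum.inr (i, h) ∧ h ∈ S i} :=
    fun i s hs => ⟨i, s, rfl, hs⟩
  have hdist1 : ∀ (i : α) (h : β), (corona G H).dist (Sum.inl i) (Sum.inr (i, h)) = 1 :=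
    fun i h => SimpleGraph.dist_eq_one_iff_adj.mpr ((CoronaAux.adj_inl_inr G H).mpr rfl)
  have aux : ∀ (a j : α) (k : β),
      ∃ z ∈ {z : α ⊕ α × β | ∃ i h, z = Sum.inr (i, h) ∧ h ∈ S i},
      (corona G H).dist (Sum.inl a) z ≠ (corona G H).dist (Sum.inr (j, k)) z := by
    intro a j k
    rcases eq_or_ne a j with rfl | hne
    · obtain ⟨j', hj'⟩ := exists_ne a
      obtain ⟨s, hs⟩ := hSne j'
      refine ⟨Sum.inr (j', s), memW j' s hs, ?_⟩
      have hz : ∀ b, (Sum.inr (j', s) : α ⊕ α × β) ≠ Sum.inr (a, b) := by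
        intro b hb
        rw [Sum.inr.injEq, Prod.mk.injEq] at hb
        exact hj' hb.1
      have hlow := CoronaAux.dist_split
        (hC.preconnected (Sum.inr (a, k)) (Sum.inr (j', s)))
        (fun p => CoronaAux.hub_mem G H (h := k) hz p)
      have h1 : (corona G H).dist (Sum.inr (a, k)) (Sum.inl a) = 1 := by
        rw [SimpleGraph.dist_comm]; exact hdist1 a k
      have hup : (corona G H).dist (Sum.inr (a, k)) (Sum.inr (j', s)) ≤
          (corona G H).dist (Sum.inr (a, k)) (Sum.inl a) +
          (corona G H).dist (Sum.inl a) (Sum.inr (j', s)) :=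
        hC.dist_triangle (v := Sum.inl a)
      rw [h1] at hlow hup
      omega
    · obtain ⟨s, hs⟩ := hSne a
      refine ⟨Sum.inr (a, s), memW a s hs, ?_⟩
      rw [hdist1 a s]
      intro hcon
      have hadj : (corona G H).Adj (Sum.inr (j, k)) (Sum.inr (a, s)) :=
        SimpleGraph.dist_eq_one_iff_adj.mp hcon.symm
      exact hne (((CoronaAux.adj_inr_inr G H).mp hadj).1).symm
  intro x y hxy
  rcases x with a | ⟨i, h⟩
  · rcases y with b | ⟨j, k⟩
    · have hab : a ≠ b := fun e => hxy (by rw [e])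
      obtain ⟨s, hs⟩ := hSne b
      refine ⟨Sum.inr (b, s), memW b s hs, ?_⟩
      rw [hdist1 b s]
      intro hcon
      exact hab ((CoronaAux.adj_inl_inr G H).mp (SimpleGraph.dist_eq_one_iff_adj.mp hcon))
    · exact aux a j k
  · rcases y with b | ⟨j, k⟩
    · obtain ⟨z, hz, hd⟩ := aux b i h
      exact ⟨z, hz, hd.symm⟩
    · rcases eq_or_ne i j with rfl | hij
      · have hk : h ≠ k := fun e => hxy (by rw [e])
        obtain ⟨s, hs, hd⟩ := hS i h k hk
        refine ⟨Sum.inr (i, s), memW i s hs, ?_⟩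
        rw [CoronaAux.dist_copy G H hG hH hdiam i h s,
          CoronaAux.dist_copy G H hG hH hdiam i k s]
        exact hd
      · obtain ⟨s, hs⟩ := hSne i
        refine ⟨Sum.inr (i, s), memW i s hs, ?_⟩
        have hx2 : (corona G H).dist (Sum.inr (i, h)) (Sum.inr (i, s)) ≤ 2 := by
          rw [CoronaAux.dist_copy G H hG hH hdiam]; exact hdiam h s
        have hzj : ∀ b, (Sum.inr (i, s) : α ⊕ α × β) ≠ Sum.inr (j, b) := by
          intro b hb
          rw [Sum.inr.injEq, Prod.mk.injEq] at hb
          exact hij hb.1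
        have hsplit1 := CoronaAux.dist_split
          (hC.preconnected (Sum.inr (j, k)) (Sum.inr (i, s)))
          (fun p => CoronaAux.hub_mem G H (h := k) hzj p)
        have hzi : ∀ b, (Sum.inl j : α ⊕ α × β) ≠ Sum.inr (i, b) := by simp
        have hsplit2 := CoronaAux.dist_split
          (hC.preconnected (Sum.inl j) (Sum.inr (i, s)))
          (fun p => CoronaAux.hub_mem' G H (h := s) hzi p)
        have hji : 0 < (corona G H).dist (Sum.inl j) (Sum.inl i) :=
          hC.pos_dist_of_ne (by simpa using hij.symm)
        have hjk : 0 < (corona G H).dist (Sum.inr (j, k)) (Sum.inl j) :=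
          hC.pos_dist_of_ne (by simp)
        have his : (corona G H).dist (Sum.inl i) (Sum.inr (i, s)) = 1 := hdist1 i s
        omega
end

section
/- Let H be a connected graph and S ⊆ V(H). Then S is a resolving set of the corona product K_1 ⊙ H (the graph obtained from H by adding one universal vertex) if and only if S is a strictly locating set of H. -/
open SimpleGraph

lemma cone_adj_some_some {β : Type*} (H : SimpleGraph β) (a b : β) :
    (cone H).Adj (some a) (some b) ↔ H.Adj a b := by
  simp only [cone, fromRel_adj]
  constructor
  · rintro ⟨_, h | h⟩
    · exact h
    · exact h.symm
  · intro h
    exact ⟨by simp [h.ne], Or.inl h⟩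

lemma cone_adj_none_some {β : Type*} (H : SimpleGraph β) (b : β) :
    (cone H).Adj none (some b) := by
  simp [cone, fromRel_adj]

lemma cone_dist_none_some {β : Type*} (H : SimpleGraph β) (b : β) :
    (cone H).dist none (some b) = 1 :=
  dist_eq_one_iff_adj.mpr (cone_adj_none_some H b)

lemma cone_dist_adj {β : Type*} (H : SimpleGraph β) {a b : β} (h : H.Adj a b) :
    (cone H).dist (some a) (some b) = 1 :=
  dist_eq_one_iff_adj.mpr ((cone_adj_some_some H a b).mpr h)

lemma cone_dist_nadj {β : Type*} (H : SimpleGraph β) {a b : β} (hab : a ≠ b)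
    (h : ¬ H.Adj a b) : (cone H).dist (some a) (some b) = 2 := by
  have w : (cone H).Walk (some a) (some b) :=
    Walk.cons ((cone_adj_none_some H a).symm) (Walk.cons (cone_adj_none_some H b) Walk.nil)
  have h2 : (cone H).dist (some a) (some b) ≤ 2 := by
    have := dist_le (Walk.cons ((cone_adj_none_some H a).symm)
      (Walk.cons (cone_adj_none_some H b) Walk.nil))
    simpa using this
  have h0 : (cone H).dist (some a) (some b) ≠ 0 := by
    rw [ne_eq, dist_eq_zero_iff_eq_or_not_reachable]
    push_neg
    exact ⟨by simpa using hab, w.reachable⟩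
  have h1 : (cone H).dist (some a) (some b) ≠ 1 := by
    rw [ne_eq, dist_eq_one_iff_adj, cone_adj_some_some]
    exact h
  omega

theorem stmt4 {β : Type*} (H : SimpleGraph β) (hH : H.Connected) (S : Set β) :
    resolvingSet (cone H) (some '' S) ↔ strictlyLocatingSet H S := by
  constructor
  · intro hres
    constructor
    · intro u v hu hv huv hN
      obtain ⟨z, hz, hd⟩ := hres (some u) (some v) (by simpa using huv)
      obtain ⟨s, hs, rfl⟩ := hz
      apply hd
      have hus : u ≠ s := fun h => hu (h ▸ hs)
      have hvs : v ≠ s := fun h => hv (h ▸ hs)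
      by_cases ha : H.Adj u s
      · have hmem : s ∈ H.neighborSet u ∩ S := ⟨ha, hs⟩
        rw [hN] at hmem
        rw [cone_dist_adj H ha, cone_dist_adj H hmem.1]
      · have hna : ¬ H.Adj v s := by
          intro h
          have hmem : s ∈ H.neighborSet v ∩ S := ⟨h, hs⟩
          rw [← hN] at hmem
          exact ha hmem.1
        rw [cone_dist_nadj H hus ha, cone_dist_nadj H hvs hna]
    · intro u hu hN
      obtain ⟨z, hz, hd⟩ := hres (some u) none (by simp)
      obtain ⟨s, hs, rfl⟩ := hz
      apply hd
      have hadj : H.Adj u s := by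
        have : s ∈ H.neighborSet u ∩ S := by rw [hN]; exact hs
        exact this.1
      rw [cone_dist_adj H hadj, cone_dist_none_some]
  · rintro ⟨hloc, hstrict⟩ x y hxy
    cases x with
    | none =>
      cases y with
      | none => exact absurd rfl hxy
      | some v =>
        by_cases hv : v ∈ S
        · exact ⟨some v, ⟨v, hv, rfl⟩, by rw [cone_dist_none_some, SimpleGraph.dist_self]; omega⟩
        · have hss : H.neighborSet v ∩ S ⊂ S :=
            (Set.inter_subset_right).ssubset_of_ne (hstrict v hv)
          obtain ⟨s, hs, hns⟩ := Set.exists_of_ssubset hss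
          have hna : ¬ H.Adj v s := fun h => hns ⟨h, hs⟩
          have hvs : v ≠ s := fun h => hv (h ▸ hs)
          refine ⟨some s, ⟨s, hs, rfl⟩, ?_⟩
          rw [cone_dist_none_some, cone_dist_nadj H hvs hna]
          omega
    | some u =>
      cases y with
      | none =>
        by_cases hu : u ∈ S
        · exact ⟨some u, ⟨u, hu, rfl⟩, by rw [cone_dist_none_some, SimpleGraph.dist_self]; omega⟩
        · have hss : H.neighborSet u ∩ S ⊂ S :=
            (Set.inter_subset_right).ssubset_of_ne (hstrict u hu)
          obtain ⟨s, hs, hns⟩ := Set.exists_of_ssubset hss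
          have hna : ¬ H.Adj u s := fun h => hns ⟨h, hs⟩
          have hus : u ≠ s := fun h => hu (h ▸ hs)
          refine ⟨some s, ⟨s, hs, rfl⟩, ?_⟩
          rw [cone_dist_none_some, cone_dist_nadj H hus hna]
          omega
      | some v =>
        have huv : u ≠ v := fun h => hxy (by rw [h])
        have key : ∀ a b : β, a ≠ b → (cone H).dist (some a) (some b) ≠ 0 := by
          intro a b hab
          by_cases ha : H.Adj a b
          · rw [cone_dist_adj H ha]; omega
          · rw [cone_dist_nadj H hab ha]; omega
        by_cases hu : u ∈ S
        · refine ⟨some u, ⟨u, hu, rfl⟩, ?_⟩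
          rw [SimpleGraph.dist_self]
          exact (key v u huv.symm).symm
        · by_cases hv : v ∈ S
          · refine ⟨some v, ⟨v, hv, rfl⟩, ?_⟩
            rw [SimpleGraph.dist_self]
            exact key u v huv
          · have hne := hloc u v hu hv huv
            have hex : ∃ s, ¬ (s ∈ H.neighborSet u ∩ S ↔ s ∈ H.neighborSet v ∩ S) := by
              by_contra hc
              push_neg at hc
              exact hne (Set.ext fun s => hc s)
            obtain ⟨s, hs⟩ := hex
            by_cases hm : s ∈ H.neighborSet u ∩ S
            · have hm2 : s ∉ H.neighborSet v ∩ S := fun h => hs ⟨fun _ => h, fun _ => hm⟩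
              have hus : u ≠ s := fun h => hu (h ▸ hm.2)
              have hvs : v ≠ s := fun h => hv (h ▸ hm.2)
              refine ⟨some s, ⟨s, hm.2, rfl⟩, ?_⟩
              rw [cone_dist_adj H hm.1, cone_dist_nadj H hvs (fun h => hm2 ⟨h, hm.2⟩)]
              omega
            · have hm2 : s ∈ H.neighborSet v ∩ S := by
                by_contra h
                exact hs ⟨fun a => absurd a hm, fun a => absurd a h⟩
              have hus : u ≠ s := fun h => hu (h ▸ hm2.2)
              have hvs : v ≠ s := fun h => hv (h ▸ hm2.2)
              refine ⟨some s, ⟨s, hm2.2, rfl⟩, ?_⟩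
              rw [cone_dist_adj H hm2.1, cone_dist_nadj H hus (fun h => hm ⟨h, hm2.2⟩)]
              omega
end

section
/- Let ℓ ≥ 3 and consider the path P_{2ℓ+1} with vertices 1,...,2ℓ+1. Suppose W ⊆ V(P_{2ℓ+1}) contains exactly one vertex from each pair {2j−1, 2j} for j ∈ {1,...,ℓ−1}, and from the final triple {2ℓ−1, 2ℓ, 2ℓ+1} the set W contains either (a) the vertex 2ℓ−1 together with 2ℓ−2 ∈ W, or (b) vertices 2ℓ−2 ∈ W and 2ℓ ∈ W with 2ℓ−3 ∉ W, or (c) vertices 2ℓ−3 ∈ W and 2ℓ+1 ∈ W with 2ℓ−2 ∉ W, or (d) the vertex 2ℓ−1 together with one of 2ℓ, 2ℓ+1. Then in cases (a) and (d), W is a strictly locating set of P_{2ℓ+1}. -/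
open SimpleGraph

lemma pathG_adj {n : ℕ} (x y : Fin n) :
    (pathG n).Adj x y ↔ ((x : ℕ) + 1 = y ∨ (y : ℕ) + 1 = x) := by
  simp only [pathG, SimpleGraph.fromRel_adj]
  constructor
  · rintro ⟨-, h⟩; exact h
  · intro h
    refine ⟨?_, h⟩
    intro hxy
    subst hxy
    omega

lemma nat_core (ℓ : ℕ) (hℓ : 3 ≤ ℓ) (mem : ℕ → Prop)
    (hpair : ∀ j, j < ℓ - 1 → mem (2*j) ∨ mem (2*j+1))
    (hmid : mem (2*ℓ-2))
    (u v : ℕ) (hv : v ≤ 2*ℓ) (huv : u < v)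
    (hmu : ¬ mem u) (hmv : ¬ mem v)
    (key : ∀ n, mem n → ((n+1 = u ∨ u+1 = n) ↔ (n+1 = v ∨ v+1 = n))) : False := by
  have hcongr : ∀ a b : ℕ, a = b → mem a → mem b := by
    rintro a b rfl h; exact h
  -- no vertex just below u is in mem
  have hless : ∀ n, n + 1 = u → ¬ mem n := by
    intro n hn hmem
    have := (key n hmem).mp (Or.inl hn)
    omega
  by_cases hA : mem (u+1)
  · -- trace of u is nonempty; forces v = u + 2
    have h1 := (key (u+1) hA).mp (Or.inr rfl)
    have hvu : v = u + 2 := by omega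
    have h3 : ¬ mem (u+3) := by
      intro hmem
      have := (key (u+3) hmem).mpr (Or.inr (by omega))
      omega
    rcases Nat.even_or_odd u with ⟨j, hj⟩ | ⟨j, hj⟩
    · -- u even
      by_cases hcase : u + 2 ≥ 2*ℓ - 2
      · -- then u+2 = 2ℓ-2 or u = 2ℓ-2, both contradict hmid
        rcases (by omega : u + 2 = 2*ℓ - 2 ∨ u = 2*ℓ - 2) with h2 | h2
        · exact hmv (hcongr _ _ (by omega) hmid)
        · exact hmu (hcongr _ _ (by omega) hmid)
      · have hj1 : j + 1 < ℓ - 1 := by omega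
        rcases hpair (j+1) hj1 with h | h
        · exact hmv (hcongr _ _ (by omega) h)
        · exact h3 (hcongr _ _ (by omega) h)
    · -- u odd, u = 2j+1
      have hjlt : j < ℓ - 1 := by omega
      rcases hpair j hjlt with h | h
      · exact hless (2*j) (by omega) h
      · exact hmu (hcongr _ _ (by omega) h)
  · -- trace of u is empty
    rcases Nat.even_or_odd u with ⟨j, hj⟩ | ⟨j, hj⟩
    · -- u even, u < 2ℓ
      by_cases h2 : u = 2*ℓ - 2
      · exact hmu (hcongr _ _ (by omega) hmid)
      · have hjlt : j < ℓ - 1 := by omega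
        rcases hpair j hjlt with h | h
        · exact hmu (hcongr _ _ (by omega) h)
        · exact hA (hcongr _ _ (by omega) h)
    · -- u odd
      by_cases hjlt : j < ℓ - 1
      · rcases hpair j hjlt with h | h
        · exact hless (2*j) (by omega) h
        · exact hmu (hcongr _ _ (by omega) h)
      · -- u = 2ℓ-1, but then u-1 = 2ℓ-2 ∈ mem contradicts hless
        exact hless (2*ℓ-2) (by omega) hmid

theorem stmt17 (ℓ : ℕ) (hℓ : 3 ≤ ℓ) (W : Set (Fin (2 * ℓ + 1)))
    (hpairs : ∀ j : ℕ, j < ℓ - 1 →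
      ∀ a b : Fin (2 * ℓ + 1), (a : ℕ) = 2 * j → (b : ℕ) = 2 * j + 1 →
        ((a ∈ W ∧ b ∉ W) ∨ (a ∉ W ∧ b ∈ W)))
    (hmid : ∀ v : Fin (2 * ℓ + 1), (v : ℕ) = 2 * ℓ - 2 → v ∈ W)
    (hlast : ∃ v : Fin (2 * ℓ + 1),
      ((v : ℕ) = 2 * ℓ - 3 ∨ (v : ℕ) = 2 * ℓ - 1 ∨ (v : ℕ) = 2 * ℓ) ∧ v ∈ W) :
    strictlyLocatingSet (pathG (2 * ℓ + 1)) W  := by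
  set G := pathG (2*ℓ+1) with hG
  -- the ℕ-level membership predicate
  set mem : ℕ → Prop := fun n => ∃ w : Fin (2*ℓ+1), (w : ℕ) = n ∧ w ∈ W with hmem
  have hmemF : ∀ x : Fin (2*ℓ+1), x ∉ W → ¬ mem (x : ℕ) := by
    rintro x hx ⟨w, hw, hwW⟩
    exact hx (by rwa [Fin.ext_iff.mpr hw] at hwW)
  have hpair' : ∀ j, j < ℓ - 1 → mem (2*j) ∨ mem (2*j+1) := by
    intro j hj
    have ha : 2*j < 2*ℓ+1 := by omega
    have hb : 2*j+1 < 2*ℓ+1 := by omega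
    rcases hpairs j hj ⟨2*j, ha⟩ ⟨2*j+1, hb⟩ rfl rfl with ⟨h, -⟩ | ⟨-, h⟩
    · exact Or.inl ⟨⟨2*j, ha⟩, rfl, h⟩
    · exact Or.inr ⟨⟨2*j+1, hb⟩, rfl, h⟩
  have hmid' : mem (2*ℓ-2) :=
    ⟨⟨2*ℓ-2, by omega⟩, rfl, hmid ⟨2*ℓ-2, by omega⟩ rfl⟩
  constructor
  · -- locating
    intro u v hu hv hne heq
    have hkey : ∀ n, mem n →
        ((n+1 = (u:ℕ) ∨ (u:ℕ)+1 = n) ↔ (n+1 = (v:ℕ) ∨ (v:ℕ)+1 = n)) := by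
      rintro n ⟨w, rfl, hwW⟩
      have h1 := Set.ext_iff.mp heq w
      simp only [Set.mem_inter_iff, SimpleGraph.mem_neighborSet, hG, pathG_adj,
        hwW, and_true] at h1
      tauto
    have hne' : (u:ℕ) ≠ (v:ℕ) := fun h => hne (Fin.ext h)
    rcases lt_or_gt_of_ne hne' with h | h
    · exact nat_core ℓ hℓ mem hpair' hmid' (u:ℕ) (v:ℕ) (by omega) h
        (hmemF u hu) (hmemF v hv) hkey
    · exact nat_core ℓ hℓ mem hpair' hmid' (v:ℕ) (u:ℕ) (by omega) h
        (hmemF v hv) (hmemF u hu) (fun n hn => (hkey n hn).symm)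
  · -- strictly
    intro u hu habs
    -- vertex from the first pair, and vertex 2ℓ-2, are both in W and adjacent to u
    have hw0 : ∃ w0 : Fin (2*ℓ+1), (w0 : ℕ) ≤ 1 ∧ w0 ∈ W := by
      rcases hpair' 0 (by omega) with ⟨w, hw, hwW⟩ | ⟨w, hw, hwW⟩
      · exact ⟨w, by omega, hwW⟩
      · exact ⟨w, by omega, hwW⟩
    obtain ⟨w0, hw0le, hw0W⟩ := hw0
    obtain ⟨w2, hw2v, hw2W⟩ := hmid'
    have hadj0 : (u:ℕ)+1 = (w0:ℕ) ∨ (w0:ℕ)+1 = (u:ℕ) := by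
      have := (habs.symm ▸ hw0W : w0 ∈ G.neighborSet u ∩ W).1
      rwa [SimpleGraph.mem_neighborSet, hG, pathG_adj] at this
    have hadj2 : (u:ℕ)+1 = (w2:ℕ) ∨ (w2:ℕ)+1 = (u:ℕ) := by
      have := (habs.symm ▸ hw2W : w2 ∈ G.neighborSet u ∩ W).1
      rwa [SimpleGraph.mem_neighborSet, hG, pathG_adj] at this
    omega
end
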